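/- Let K be an n×n complex matrix. If there exists a determinantal point process with marginal kernel K, then for every finset J of Fin n, the complex number (−1)^{|J|} · det(K − 𝟙_J) is a nonnegative real number. -/

import Mathlib

open Matrix

/-- The submatrix of `K` with rows indexed by `A` and columns indexed by `B`. -/
def kSub {n : ℕ} (K : Matrix (Fin n) (Fin n) ℂ) (A B : Finset (Fin n)) :
    Matrix A B ℂ :=
  Matrix.of fun i j => K i j

/-- `p` is a determinantal point process with marginal kernel `K`:
`p` is a probability mass function on finsets of `Fin n` and for every finset `Y`
the probability that `Y` is contained in the sample equals `det (K_Y)`. -/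
def IsDPP {n : ℕ} (K : Matrix (Fin n) (Fin n) ℂ) (p : Finset (Fin n) → ℝ) : Prop :=
  (∀ S, 0 ≤ p S) ∧ (∑ S : Finset (Fin n), p S = 1) ∧
    ∀ Y : Finset (Fin n),
      ((∑ S ∈ Finset.univ.filter fun S => Y ⊆ S, p S : ℝ) : ℂ) =
        (kSub K Y Y).det


/-- The diagonal 0/1 indicator matrix of a finset `J`. -/
def indMat {n : ℕ} (J : Finset (Fin n)) : Matrix (Fin n) (Fin n) ℂ :=
  Matrix.diagonal fun i => if i ∈ J then 1 else 0

/-!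
Expanding the determinant multilinearly in its rows gives
`det (K - 𝟙_J) = ∑_{s ⊆ J} (-1)^|s| det K_{sᶜ}`. For a DPP each principal minor `det K_{sᶜ}` is the
probability that the sample contains `sᶜ`, and inclusion–exclusion over `s ⊆ J` collapses the
alternating sum to `(-1)^|J|` times the probability that the sample is exactly `Jᶜ`.
-/

open Finset

namespace Finset

variable {α R : Type*} [DecidableEq α] [CommRing R]

theorem sum_Icc_neg_one_pow_card (A B : Finset α) :
    ∑ s ∈ Icc A B, (-1 : R) ^ #s = if A = B then (-1) ^ #B else 0 := by
  by_cases hAB : A ⊆ B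
  · have hdisj : ∀ t ∈ (B \ A).powerset, Disjoint A t := fun t ht =>
      disjoint_sdiff.mono_right (mem_powerset.mp ht)
    have hcast := congrArg (Int.cast : ℤ → R) (sum_powerset_neg_one_pow_card (x := B \ A))
    push_cast at hcast
    rw [Icc_eq_image_powerset hAB, sum_image fun t ht u hu h => ?_]
    · rw [sum_congr rfl fun t ht => by rw [card_union_of_disjoint (hdisj t ht), pow_add],
        ← mul_sum, hcast]
      split_ifs with hBA hA hA
      · rw [hA, mul_one]
      · exact absurd (hAB.antisymm (sdiff_eq_empty_iff_subset.mp hBA)) hA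
      · exact absurd (by simp [hA]) hBA
      · rw [mul_zero]
    · rw [← union_sdiff_cancel_left (hdisj t ht), h, union_sdiff_cancel_left (hdisj u hu)]
  · rw [Icc_eq_empty fun h => hAB h, sum_empty, if_neg fun h => hAB h.le]

variable [Fintype α]

theorem sum_powerset_neg_one_pow_mul_sum_compl_subset (f : Finset α → R) (J : Finset α) :
    ∑ s ∈ J.powerset, (-1) ^ #s * ∑ S with sᶜ ⊆ S, f S = (-1) ^ #J * f Jᶜ := by
  calc ∑ s ∈ J.powerset, (-1) ^ #s * ∑ S with sᶜ ⊆ S, f S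
      = ∑ S, (∑ s ∈ Icc Sᶜ J, (-1) ^ #s) * f S := by
        simp_rw [mul_sum, sum_mul]
        refine sum_comm' fun s S => ?_
        simp only [mem_powerset, mem_filter, mem_univ, true_and, and_true, mem_Icc]
        rw [compl_le_iff_compl_le]
        exact and_comm
    _ = (-1) ^ #J * f Jᶜ := by
        simp_rw [sum_Icc_neg_one_pow_card, compl_eq_comm (y := J), ite_mul, zero_mul]
        rw [sum_ite_eq, if_pos (mem_univ _)]

end Finset

namespace Matrix

variable {ι R : Type*} [Fintype ι] [DecidableEq ι] [CommRing R]

theorem det_piecewise_single (A : Matrix ι ι R) (s : Finset ι) :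
    (of (s.piecewise (fun i => Pi.single i 1) A)).det =
      (A.submatrix ((↑) : ↥sᶜ → ι) (↑)).det := by
  set M := of (s.piecewise (fun i => Pi.single i 1) A)
  have hM_mem {i : ι} (hi : i ∈ s) (j : ι) : M i j = (Pi.single i 1 : ι → R) j := by
    simp [M, piecewise, hi]
  have hM_notMem {i : ι} (hi : i ∉ s) (j : ι) : M i j = A i j := by
    simp [M, piecewise, hi]
  have hone : toSquareBlockProp M (· ∉ sᶜ) = 1 := by
    ext i j
    rw [toSquareBlockProp_def, of_apply, hM_mem (by simpa using i.2), one_apply,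
      Pi.single_apply]
    simp [Subtype.ext_iff, eq_comm]
  have hcompl : toSquareBlockProp M (· ∈ sᶜ) = A.submatrix (↑) (↑) := by
    ext i j
    exact hM_notMem (mem_compl.mp i.2) j
  rw [twoBlockTriangular_det _ (· ∈ sᶜ) fun i hi j hj => ?_, hone, hcompl, det_one, mul_one]
  · -- the `Fintype ↥sᶜ` instances coming from `toSquareBlockProp` and from `↥sᶜ` differ
    convert rfl
  have hji : j ≠ i := by rintro rfl; exact hi hj
  rw [hM_mem (by simpa using hi), Pi.single_eq_of_ne hji]

theorem det_add_diagonal (A : Matrix ι ι R) (d : ι → R) :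
    (A + diagonal d).det =
      ∑ s : Finset ι, (∏ i ∈ s, d i) * (A.submatrix ((↑) : ↥sᶜ → ι) (↑)).det := by
  have hsplit : (diagonal d + A).det = ∑ s : Finset ι, (of (s.piecewise (diagonal d) A)).det :=
    detRowAlternating.toMultilinearMap.map_add_univ _ _
  rw [add_comm, hsplit]
  refine sum_congr rfl fun s _ => ?_
  set m := s.piecewise (fun i => Pi.single i 1) A
  have hrows : s.piecewise (diagonal d) A = s.piecewise (fun i => d i • m i) m := by
    ext i j
    by_cases hi : i ∈ s
    · simp [m, piecewise, hi, diagonal_apply, Pi.single_apply, eq_comm]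
    · simp [m, piecewise, hi]
  rw [hrows, ← det_piecewise_single]
  exact detRowAlternating.toMultilinearMap.map_piecewise_smul _ _ _

theorem det_sub_diagonal_indicator (A : Matrix ι ι R) (J : Finset ι) :
    (A - diagonal fun i => if i ∈ J then 1 else 0).det =
      ∑ s ∈ J.powerset, (-1) ^ #s * (A.submatrix ((↑) : ↥sᶜ → ι) (↑)).det := by
  rw [sub_eq_add_neg, diagonal_neg, det_add_diagonal,
    ← sum_subset (subset_univ J.powerset) fun s _ hs => ?_]
  · refine sum_congr rfl fun s hs => ?_
    rw [prod_eq_pow_card (b := -1) fun i hi => by simp [mem_powerset.mp hs hi]]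
  · obtain ⟨i, his, hiJ⟩ := not_subset.mp (mt mem_powerset.mpr hs)
    rw [prod_eq_zero his (by simp [hiJ]), zero_mul]

end Matrix

theorem stmt_12 {n : ℕ} (K : Matrix (Fin n) (Fin n) ℂ)
    (h : ∃ p : Finset (Fin n) → ℝ, IsDPP K p) :
    ∀ J : Finset (Fin n),
      ∃ r : ℝ, 0 ≤ r ∧ (-1 : ℂ) ^ J.card * (K - indMat J).det = r := by
  obtain ⟨p, hp_nonneg, -, hp_marginal⟩ := h
  intro J
  refine ⟨p Jᶜ, hp_nonneg Jᶜ, ?_⟩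
  have hminor (Y : Finset (Fin n)) :
      (K.submatrix ((↑) : ↥Y → Fin n) (↑)).det = ∑ S with Y ⊆ S, (p S : ℂ) := by
    rw [← Complex.ofReal_sum]
    exact (hp_marginal Y).symm
  rw [indMat, det_sub_diagonal_indicator, sum_congr rfl fun s _ => by rw [hminor],
    sum_powerset_neg_one_pow_mul_sum_compl_subset, ← mul_assoc, ← pow_add,
    Even.neg_one_pow ⟨_, rfl⟩, one_mul]
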